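/- arXiv:0811.3087 — 2 statements merged into one kernel-verified Lean document; each statement's English description precedes it below -/
import Mathlib

section
/- Let n ≥ 2. There exists a constant C > 0 depending only on n such that for every R ≥ 2 and every integer ν ≥ 1, the sum of ℓ + ℓ' over all pairs (ℓ,ℓ') of nonnegative integers satisfying R(1-2^{1-ν}) < 2ℓℓ' + (n-1)(ℓ+ℓ') < R(1-2^{-1-ν}) is at most C R² max(2^{-ν}, R^{-1/2}). -/
/-!
Put `c = n - 1`. By symmetry one may assume `ℓ ≤ ℓ'`; then `ℓ² ≤ λ_{ℓ,ℓ'} < R`, so `ℓ ≤ √R`.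
For fixed `ℓ = m`, `λ_{m,ℓ'} = (2m + c) ℓ' + c m` is affine in `ℓ'` with slope at least
`2m + 1`, so a band of width `w` holds at most `w / (2m + 1) + 1` admissible `ℓ'`, each with
`ℓ + ℓ' ≤ 2R / (2m + 1)`. Here `w = (3/2) R 2^{-ν}`; summing over `m ≤ √R`, the first part is
controlled by the convergent series `∑ 1 / (2m + 1)²` and gives `O(R² 2^{-ν})`, the `+ 1` part
gives `O(R^{3/2})`.
-/

open Finset

def pairEigenvalue (c : ℝ) (k : ℕ × ℕ) : ℝ :=
  2 * (k.1 : ℝ) * (k.2 : ℝ) + c * ((k.1 : ℝ) + (k.2 : ℝ))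

theorem card_le_of_affine_mem_Ioo {T : Finset ℕ} {d c a b : ℝ} (hd : 0 < d) (hab : a ≤ b)
    (h : ∀ j ∈ T, d * j + c ∈ Set.Ioo a b) : (#T : ℝ) ≤ (b - a) / d + 1 := by
  rcases T.eq_empty_or_nonempty with rfl | hT
  · simp only [card_empty, Nat.cast_zero]
    positivity
  set j₀ := T.min' hT
  set j₁ := T.max' hT
  have hj : j₀ ≤ j₁ := T.min'_le_max' hT
  have hspread : d * ((j₁ : ℝ) - j₀) < b - a := by
    have h₀ := (h j₀ (T.min'_mem hT)).1
    have h₁ := (h j₁ (T.max'_mem hT)).2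
    linarith
  calc (#T : ℝ) ≤ #(Icc j₀ j₁) := by
        exact_mod_cast card_le_card fun j hj => mem_Icc.2 ⟨T.min'_le j hj, T.le_max' j hj⟩
    _ = (j₁ : ℝ) - j₀ + 1 := by
        rw [Nat.card_Icc, Nat.cast_sub (by omega)]
        push_cast
        ring
    _ ≤ (b - a) / d + 1 := by
        gcongr
        rw [le_div_iff₀ hd]
        linarith

theorem sum_range_inv_sq_odd_le_two (N : ℕ) :
    ∑ m ∈ range N, 1 / (2 * (m : ℝ) + 1) ^ 2 ≤ 2 := by
  set f : ℕ → ℝ := fun m => 2 / (2 * m + 1)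
  calc ∑ m ∈ range N, 1 / (2 * (m : ℝ) + 1) ^ 2 ≤ ∑ m ∈ range N, (f m - f (m + 1)) := by
        refine sum_le_sum fun m _ => ?_
        simp only [f]
        push_cast
        rw [div_sub_div _ _ (by positivity) (by positivity), div_le_div_iff₀ (by positivity)
          (by positivity)]
        nlinarith
    _ = f 0 - f N := sum_range_sub' f N
    _ ≤ 2 := by
        simp only [f]
        norm_num
        positivity

section PairEigenvalue

variable {c A B R : ℝ}

theorem pairEigenvalue_swap (c : ℝ) (k : ℕ × ℕ) :
    pairEigenvalue c k.swap = pairEigenvalue c k := by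
  simp only [pairEigenvalue, Prod.fst_swap, Prod.snd_swap]
  ring

theorem pairEigenvalue_mk (c : ℝ) (m j : ℕ) :
    pairEigenvalue c (m, j) = (2 * m + c) * j + c * m := by
  simp only [pairEigenvalue]
  ring

theorem sq_fst_le_pairEigenvalue (hc : 0 ≤ c) {k : ℕ × ℕ} (hk : k.1 ≤ k.2) :
    (k.1 : ℝ) ^ 2 ≤ pairEigenvalue c k := by
  have hk' : (k.1 : ℝ) ≤ k.2 := by exact_mod_cast hk
  unfold pairEigenvalue
  nlinarith [mul_nonneg hc (by positivity : (0 : ℝ) ≤ k.1 + k.2)]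

theorem two_mul_fst_add_one_mul_le_pairEigenvalue (hc : 1 ≤ c) {k : ℕ × ℕ} (hk : k.1 ≤ k.2) :
    (2 * k.1 + 1) * ((k.1 : ℝ) + k.2) ≤ 2 * pairEigenvalue c k := by
  have hk' : (k.1 : ℝ) ≤ k.2 := by exact_mod_cast hk
  unfold pairEigenvalue
  nlinarith [mul_le_mul_of_nonneg_right hc (by positivity : (0 : ℝ) ≤ k.1 + k.2),
    mul_le_mul_of_nonneg_left hk' (by positivity : (0 : ℝ) ≤ k.1)]

theorem sum_le_of_fst_eq (hc : 1 ≤ c) (hR : 0 ≤ R) (hAB : A ≤ B) (hBR : B ≤ R) {m : ℕ}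
    {t : Finset (ℕ × ℕ)} (ht : ∀ k ∈ t, k.1 = m ∧ m ≤ k.2 ∧ pairEigenvalue c k ∈ Set.Ioo A B) :
    ∑ k ∈ t, ((k.1 : ℝ) + k.2) ≤ 2 * R * (B - A) / (2 * m + 1) ^ 2 + 2 * R := by
  have hcard : (#t : ℝ) ≤ (B - A) / (2 * m + 1) + 1 :=
    calc (#t : ℝ) = #(t.image Prod.snd) := by
          rw [card_image_of_injOn fun k hk k' hk' h =>
            Prod.ext ((ht k hk).1.trans (ht k' hk').1.symm) h]
      _ ≤ (B - A) / (2 * m + c) + 1 := by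
          refine card_le_of_affine_mem_Ioo (c := c * m) (by positivity) hAB fun j hj => ?_
          obtain ⟨k, hk, rfl⟩ := mem_image.1 hj
          obtain ⟨hkm, -, hkAB⟩ := ht k hk
          rwa [← pairEigenvalue_mk, ← hkm]
      _ ≤ (B - A) / (2 * m + 1) + 1 := by gcongr
  have hterm : ∀ k ∈ t, (k.1 : ℝ) + k.2 ≤ 2 * R / (2 * m + 1) := by
    intro k hk
    obtain ⟨hkm, hmk, hkAB⟩ := ht k hk
    rw [le_div_iff₀ (by positivity), mul_comm, ← hkm]
    linarith [two_mul_fst_add_one_mul_le_pairEigenvalue hc (hkm ▸ hmk), hkAB.2]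
  calc ∑ k ∈ t, ((k.1 : ℝ) + k.2) ≤ #t * (2 * R / (2 * m + 1)) := by
        simpa only [nsmul_eq_mul] using sum_le_card_nsmul t _ _ hterm
    _ ≤ ((B - A) / (2 * m + 1) + 1) * (2 * R / (2 * m + 1)) := by gcongr
    _ = 2 * R * (B - A) / (2 * m + 1) ^ 2 + 2 * R / (2 * m + 1) := by
        field_simp
    _ ≤ 2 * R * (B - A) / (2 * m + 1) ^ 2 + 2 * R := by
        gcongr
        exact div_le_self (by positivity) (by linarith [m.cast_nonneg (α := ℝ)])

theorem sum_le_of_fst_le_snd (hc : 1 ≤ c) (hR : 0 ≤ R) (hAB : A ≤ B) (hBR : B ≤ R)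
    {t : Finset (ℕ × ℕ)} (ht : ∀ k ∈ t, k.1 ≤ k.2 ∧ pairEigenvalue c k ∈ Set.Ioo A B) :
    ∑ k ∈ t, ((k.1 : ℝ) + k.2) ≤ 4 * R * (B - A) + 2 * R * (√R + 1) := by
  set M := ⌊√R⌋₊
  have hmaps : ∀ k ∈ t, k.1 ∈ range (M + 1) := fun k hk => by
    obtain ⟨hk, hkAB⟩ := ht k hk
    have hsq : (k.1 : ℝ) ^ 2 ≤ R :=
      (sq_fst_le_pairEigenvalue (by linarith) hk).trans (hkAB.2.le.trans hBR)
    exact mem_range_succ_iff.2 (Nat.le_floor ((Real.le_sqrt (by positivity) hR).2 hsq))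
  calc ∑ k ∈ t, ((k.1 : ℝ) + k.2)
      = ∑ m ∈ range (M + 1), ∑ k ∈ t with k.1 = m, ((k.1 : ℝ) + k.2) :=
        (sum_fiberwise_of_maps_to hmaps _).symm
    _ ≤ ∑ m ∈ range (M + 1), (2 * R * (B - A) / (2 * m + 1) ^ 2 + 2 * R) := by
        refine sum_le_sum fun m _ => sum_le_of_fst_eq hc hR hAB hBR fun k hk => ?_
        obtain ⟨hkt, rfl⟩ := mem_filter.1 hk
        exact ⟨rfl, (ht k hkt).1, (ht k hkt).2⟩
    _ = 2 * R * (B - A) * ∑ m ∈ range (M + 1), 1 / (2 * (m : ℝ) + 1) ^ 2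
          + (M + 1) * (2 * R) := by
        rw [sum_add_distrib, mul_sum, sum_const, card_range, nsmul_eq_mul]
        push_cast
        simp only [mul_one_div]
    _ ≤ 2 * R * (B - A) * 2 + (√R + 1) * (2 * R) := by
        gcongr
        · exact sum_range_inv_sq_odd_le_two _
        · exact Nat.floor_le (Real.sqrt_nonneg R)
    _ = 4 * R * (B - A) + 2 * R * (√R + 1) := by ring

theorem sum_le_of_pairEigenvalue_mem_Ioo (hc : 1 ≤ c) (hR : 0 ≤ R) (hAB : A ≤ B) (hBR : B ≤ R)
    {s : Finset (ℕ × ℕ)} (hs : ∀ k ∈ s, pairEigenvalue c k ∈ Set.Ioo A B) :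
    ∑ k ∈ s, ((k.1 : ℝ) + k.2) ≤ 8 * R * (B - A) + 4 * R * (√R + 1) := by
  rw [← sum_filter_add_sum_filter_not s fun k => k.1 ≤ k.2]
  have hle := sum_le_of_fst_le_snd hc hR hAB hBR (t := s.filter fun k => k.1 ≤ k.2)
    fun k hk => ⟨(mem_filter.1 hk).2, hs k (mem_filter.1 hk).1⟩
  have hgt : ∑ k ∈ s with ¬k.1 ≤ k.2, ((k.1 : ℝ) + k.2) ≤ 4 * R * (B - A) + 2 * R * (√R + 1) :=
    calc ∑ k ∈ s with ¬k.1 ≤ k.2, ((k.1 : ℝ) + k.2)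
        = ∑ k ∈ (s.filter fun k => ¬k.1 ≤ k.2).image Prod.swap, ((k.1 : ℝ) + k.2) := by
          rw [sum_image Prod.swap_injective.injOn]
          exact sum_congr rfl fun k _ => add_comm _ _
      _ ≤ 4 * R * (B - A) + 2 * R * (√R + 1) := by
          refine sum_le_of_fst_le_snd hc hR hAB hBR fun k hk => ?_
          obtain ⟨k, hkf, rfl⟩ := mem_image.1 hk
          obtain ⟨hks, hnle⟩ := mem_filter.1 hkf
          exact ⟨by simp only [Prod.fst_swap, Prod.snd_swap]; omega,
            (pairEigenvalue_swap c k).symm ▸ hs k hks⟩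
  linarith

end PairEigenvalue

/-- Let `n ≥ 2`.  There is a constant `C > 0`, depending only on `n`, such
that for every `R ≥ 2` and every integer `ν ≥ 1`, the sum of `ℓ + ℓ'` over all pairs
`(ℓ,ℓ')` of nonnegative integers with
`R(1-2^{1-ν}) < 2ℓℓ' + (n-1)(ℓ+ℓ') < R(1-2^{-1-ν})` is at most
`C R² max(2^{-ν}, R^{-1/2})`.  (The sum over the — finite — set of such pairs is expressed
as the supremum over finite subsets of pairs satisfying the constraint; all terms are
nonnegative.) -/
theorem eigenvalue_band_counting
    (n : ℕ) (hn : 2 ≤ n) :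
    ∃ C > (0 : ℝ), ∀ R : ℝ, 2 ≤ R → ∀ ν : ℕ, 1 ≤ ν →
      ∀ s : Finset (ℕ × ℕ),
        (∀ k ∈ s,
          R * (1 - (2 : ℝ) ^ (1 - (ν : ℤ))) <
              2 * (k.1 : ℝ) * (k.2 : ℝ) + ((n : ℝ) - 1) * ((k.1 : ℝ) + (k.2 : ℝ)) ∧
            2 * (k.1 : ℝ) * (k.2 : ℝ) + ((n : ℝ) - 1) * ((k.1 : ℝ) + (k.2 : ℝ)) <
              R * (1 - (2 : ℝ) ^ (-1 - (ν : ℤ)))) →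
        ∑ k ∈ s, ((k.1 : ℝ) + (k.2 : ℝ)) ≤
          C * R ^ 2 * max ((2 : ℝ) ^ (-(ν : ℤ))) (R ^ (-(1 / 2) : ℝ)) := by
  refine ⟨20, by norm_num, fun R hR ν _ s hs => ?_⟩
  set E := (2 : ℝ) ^ (-(ν : ℤ))
  have hE : 0 < E := by positivity
  have hR0 : 0 < R := by linarith
  have hlower : (2 : ℝ) ^ (1 - (ν : ℤ)) = 2 * E := by
    rw [sub_eq_add_neg, zpow_add₀ two_ne_zero, zpow_one]
  have hupper : (2 : ℝ) ^ (-1 - (ν : ℤ)) = E / 2 := by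
    rw [sub_eq_add_neg, zpow_add₀ two_ne_zero, zpow_neg_one, inv_mul_eq_div]
  have hc : (1 : ℝ) ≤ n - 1 := by
    have : (2 : ℝ) ≤ n := by exact_mod_cast hn
    linarith
  have hsum := sum_le_of_pairEigenvalue_mem_Ioo hc hR0.le (A := R * (1 - 2 * E))
    (B := R * (1 - E / 2)) (by nlinarith) (by nlinarith) (s := s)
    fun k hk => by rw [← hlower, ← hupper]; exact hs k hk
  have hsqrt : 1 ≤ √R := Real.one_le_sqrt.2 (by linarith)
  have hrpow : R * √R = R ^ 2 * R ^ (-(1 / 2) : ℝ) := by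
    rw [Real.rpow_neg hR0.le, ← Real.sqrt_eq_rpow]
    field_simp
    rw [pow_two, Real.mul_self_sqrt hR0.le]
  calc ∑ k ∈ s, ((k.1 : ℝ) + k.2)
      ≤ 8 * R * (R * (1 - E / 2) - R * (1 - 2 * E)) + 4 * R * (√R + 1) := hsum
    _ ≤ 12 * R ^ 2 * E + 8 * (R * √R) := by nlinarith
    _ ≤ 20 * R ^ 2 * max E (R ^ (-(1 / 2) : ℝ)) := by
        rw [hrpow]
        nlinarith [sq_nonneg R, le_max_left E (R ^ (-(1 / 2) : ℝ)),
          le_max_right E (R ^ (-(1 / 2) : ℝ))]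
end

section
/- Let n ≥ 2 and let S^{2n-1} = {z ∈ ℂ^n : ⟨z,z⟩ = 1} be the unit sphere in ℂ^n. Then the function d(z,w) = |1 - ⟨z,w⟩|^{1/2} is a metric on S^{2n-1}: it is nonnegative, symmetric, vanishes exactly when z = w, and satisfies the triangle inequality d(z,w) ≤ d(z,u) + d(u,w) for all z, u, w ∈ S^{2n-1}. -/
/-!
Write `ρ(x, y) = ‖1 - ⟪x, y⟫‖` for unit vectors. Expanding `⟪x - y, y - z⟫` with `⟪y, y⟫ = 1` gives
`1 - ⟪x, z⟫ = (1 - ⟪x, y⟫) + (1 - ⟪y, z⟫) + ⟪x - y, y - z⟫`, and `‖x - y‖² = 2 Re (1 - ⟪x, y⟫) ≤ 2 ρ(x, y)`.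
By Cauchy–Schwarz the cross term is at most `2 √ρ(x, y) √ρ(y, z)`, so
`ρ(x, z) ≤ (√ρ(x, y) + √ρ(y, z))²`.
-/

open ComplexConjugate

noncomputable section

/-- The unit sphere `S^{2n-1}` in `ℂⁿ`. -/
abbrev CSphere (n : ℕ) : Type := Metric.sphere (0 : EuclideanSpace ℂ (Fin n)) 1

/-- The Hermitian inner product `⟨z,w⟩ = ∑ z_j conj w_j` on `ℂⁿ`. -/
def herm {n : ℕ} (z w : EuclideanSpace ℂ (Fin n)) : ℂ := ∑ j, z j * (starRingEnd ℂ) (w j)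

/-- The Koranyi distance `d(z,w) = |1 - ⟨z,w⟩|^{1/2}` on the sphere. -/
def kdist {n : ℕ} (z w : CSphere n) : ℝ :=
  Real.sqrt ‖1 - herm (z : EuclideanSpace ℂ (Fin n)) (w : EuclideanSpace ℂ (Fin n))‖

open scoped InnerProductSpace

section UnitVectors

variable {𝕜 E : Type*} [RCLike 𝕜] [NormedAddCommGroup E] [InnerProductSpace 𝕜 E] {x y z : E}

theorem norm_one_sub_inner_comm (x y : E) : ‖1 - ⟪x, y⟫_𝕜‖ = ‖1 - ⟪y, x⟫_𝕜‖ := by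
  rw [← inner_conj_symm, ← RCLike.norm_conj, map_sub, map_one, RCLike.conj_conj]

theorem one_sub_inner_eq_zero_iff (hx : ‖x‖ = 1) (hy : ‖y‖ = 1) :
    1 - ⟪x, y⟫_𝕜 = 0 ↔ x = y := by
  rw [sub_eq_zero, eq_comm, inner_eq_one_iff_of_norm_eq_one hx hy]

theorem one_sub_inner_eq_add_add (hy : ‖y‖ = 1) :
    1 - ⟪x, z⟫_𝕜 = (1 - ⟪x, y⟫_𝕜) + (1 - ⟪y, z⟫_𝕜) + ⟪x - y, y - z⟫_𝕜 := by
  simp only [inner_sub_left, inner_sub_right, inner_self_eq_one_of_norm_eq_one hy]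
  ring

theorem norm_sub_sq_le_two_mul_norm_one_sub_inner (hx : ‖x‖ = 1) (hy : ‖y‖ = 1) :
    ‖x - y‖ ^ 2 ≤ 2 * ‖1 - ⟪x, y⟫_𝕜‖ :=
  calc ‖x - y‖ ^ 2 = 2 * RCLike.re (1 - ⟪x, y⟫_𝕜) := by
        rw [@norm_sub_sq 𝕜, hx, hy, map_sub, RCLike.one_re]
        ring
    _ ≤ 2 * ‖1 - ⟪x, y⟫_𝕜‖ := by gcongr; exact RCLike.re_le_norm _

theorem norm_sub_le_sqrt_two_mul_sqrt_norm_one_sub_inner (hx : ‖x‖ = 1) (hy : ‖y‖ = 1) :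
    ‖x - y‖ ≤ √2 * √‖1 - ⟪x, y⟫_𝕜‖ := by
  rw [← Real.sqrt_mul zero_le_two, Real.le_sqrt (norm_nonneg _) (by positivity)]
  exact norm_sub_sq_le_two_mul_norm_one_sub_inner hx hy

theorem sqrt_norm_one_sub_inner_le_add (hx : ‖x‖ = 1) (hy : ‖y‖ = 1) (hz : ‖z‖ = 1) :
    √‖1 - ⟪x, z⟫_𝕜‖ ≤ √‖1 - ⟪x, y⟫_𝕜‖ + √‖1 - ⟪y, z⟫_𝕜‖ := by
  set a := √‖1 - ⟪x, y⟫_𝕜‖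
  set b := √‖1 - ⟪y, z⟫_𝕜‖
  have hcross : ‖⟪x - y, y - z⟫_𝕜‖ ≤ 2 * a * b :=
    calc ‖⟪x - y, y - z⟫_𝕜‖ ≤ ‖x - y‖ * ‖y - z‖ := norm_inner_le_norm _ _
      _ ≤ (√2 * a) * (√2 * b) :=
          mul_le_mul (norm_sub_le_sqrt_two_mul_sqrt_norm_one_sub_inner hx hy)
            (norm_sub_le_sqrt_two_mul_sqrt_norm_one_sub_inner hy hz) (norm_nonneg _)
            (by positivity)
      _ = 2 * a * b := by
          rw [mul_mul_mul_comm, Real.mul_self_sqrt zero_le_two, mul_assoc]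
  rw [Real.sqrt_le_left (by positivity)]
  calc ‖1 - ⟪x, z⟫_𝕜‖ = ‖(1 - ⟪x, y⟫_𝕜) + (1 - ⟪y, z⟫_𝕜) + ⟪x - y, y - z⟫_𝕜‖ := by
        rw [one_sub_inner_eq_add_add hy]
    _ ≤ ‖1 - ⟪x, y⟫_𝕜‖ + ‖1 - ⟪y, z⟫_𝕜‖ + ‖⟪x - y, y - z⟫_𝕜‖ := norm_add₃_le
    _ ≤ a ^ 2 + b ^ 2 + 2 * a * b := by
        rw [Real.sq_sqrt (norm_nonneg _), Real.sq_sqrt (norm_nonneg _)]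
        gcongr
    _ = (a + b) ^ 2 := by ring

end UnitVectors

theorem herm_eq_inner {n : ℕ} (z w : EuclideanSpace ℂ (Fin n)) : herm z w = ⟪w, z⟫_ℂ := by
  simp [herm, PiLp.inner_apply]

theorem kdist_eq_sqrt_norm_one_sub_inner {n : ℕ} (z w : CSphere n) :
    kdist z w = √‖1 - ⟪(w : EuclideanSpace ℂ (Fin n)), z⟫_ℂ‖ := by
  rw [kdist, herm_eq_inner]

theorem kdist_is_metric_general (n : ℕ) :
    (∀ z w : CSphere n, 0 ≤ kdist z w) ∧
    (∀ z w : CSphere n, kdist z w = kdist w z) ∧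
    (∀ z w : CSphere n, kdist z w = 0 ↔ z = w) ∧
    (∀ z u w : CSphere n, kdist z w ≤ kdist z u + kdist u w) := by
  have hnorm (z : CSphere n) : ‖(z : EuclideanSpace ℂ (Fin n))‖ = 1 := norm_eq_of_mem_sphere z
  refine ⟨fun z w => Real.sqrt_nonneg _, fun z w => ?_, fun z w => ?_, fun z u w => ?_⟩
  · rw [kdist_eq_sqrt_norm_one_sub_inner, kdist_eq_sqrt_norm_one_sub_inner,
      norm_one_sub_inner_comm]
  · rw [kdist_eq_sqrt_norm_one_sub_inner, Real.sqrt_eq_zero (norm_nonneg _), norm_eq_zero,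
      one_sub_inner_eq_zero_iff (hnorm w) (hnorm z), eq_comm, Subtype.ext_iff]
  · rw [kdist_eq_sqrt_norm_one_sub_inner, kdist_eq_sqrt_norm_one_sub_inner,
      kdist_eq_sqrt_norm_one_sub_inner, add_comm]
    exact sqrt_norm_one_sub_inner_le_add (hnorm w) (hnorm u) (hnorm z)

/-- `d(z,w) = |1 - ⟨z,w⟩|^{1/2}` is a metric on the unit sphere
`S^{2n-1} ⊆ ℂⁿ`: it is nonnegative, symmetric, vanishes exactly when `z = w`, and
satisfies the triangle inequality. -/
theorem kdist_is_metric (n : ℕ) (hn : 2 ≤ n) :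
    (∀ z w : CSphere n, 0 ≤ kdist z w) ∧
    (∀ z w : CSphere n, kdist z w = kdist w z) ∧
    (∀ z w : CSphere n, kdist z w = 0 ↔ z = w) ∧
    (∀ z u w : CSphere n, kdist z w ≤ kdist z u + kdist u w) :=
  kdist_is_metric_general n
end
end
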